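/- The planar system ẋ = 0.004·(2−2z)³, ż = −(z−x−1)³ is globally asymptotically stable at the equilibrium (x,z) = (0,1): there exists β of class KL such that every solution satisfies |(x(t), z(t)−1)| ≤ β(|(x(0), z(0)−1)|, t) for all t ≥ 0. -/

import Mathlib

/-!
In the coordinates `u = x`, `v = z - 1` the system reads `u̇ = -(4/125) v³`,
`v̇ = -(v - u)³`. The quartic `V = (4/125) v⁴ + (v - u)⁴ + u⁴/10` is comparable to
`r² = (u² + v²)²`, and along solutions `V̇ = -(4 (v - u)⁶ + (8/625) u³ v³) ≤ -r³/1000`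
(all three polynomial inequalities have sum-of-squares certificates). Hence `V̇ ≤ -k V^{3/2}`,
so `(√V)⁻¹` grows at least linearly in time and `√V`, and with it `‖(u, v)‖²`, decays like
`1 / (1 + c t)`, uniformly in the initial norm.
-/

open Set Filter MeasureTheory InnerProductSpace

noncomputable section

/-- Class `K` functions: continuous on `[0,∞)`, strictly increasing, zero at zero. -/
def ClassK (α : ℝ → ℝ) : Prop :=
  ContinuousOn α (Ici 0) ∧ StrictMonoOn α (Ici 0) ∧ α 0 = 0

/-- Class `K∞` functions: class `K` and unbounded. -/
def ClassKInf (α : ℝ → ℝ) : Prop :=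
  ClassK α ∧ ∀ M : ℝ, ∃ r ∈ Ici (0:ℝ), M < α r

/-- Class `P` functions: continuous, positive for positive arguments, nonnegative at zero. -/
def ClassP (α : ℝ → ℝ) : Prop :=
  ContinuousOn α (Ici 0) ∧ (∀ r > 0, 0 < α r) ∧ 0 ≤ α 0

/-- Class `PD` (positive definite) functions: continuous, positive for positive
arguments, zero at zero. -/
def ClassPD (α : ℝ → ℝ) : Prop :=
  ContinuousOn α (Ici 0) ∧ (∀ r > 0, 0 < α r) ∧ α 0 = 0

/-- Class `KL` functions. -/
def ClassKL (β : ℝ → ℝ → ℝ) : Prop :=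
  ContinuousOn (Function.uncurry β) (Ici 0 ×ˢ Ici 0) ∧
  (∀ t ≥ 0, ClassK (fun s => β s t)) ∧
  (∀ s > 0, AntitoneOn (fun t => β s t) (Ici 0) ∧
    Tendsto (fun t => β s t) atTop (nhds 0))

def decayBound (C c s t : ℝ) : ℝ := C * s / √(1 + c * s ^ 2 * t)

section decayBound

variable {C c : ℝ}

lemma one_le_one_add_mul_sq_mul (hc : 0 ≤ c) (s : ℝ) {t : ℝ} (ht : 0 ≤ t) :
    1 ≤ 1 + c * s ^ 2 * t := by
  have : 0 ≤ c * s ^ 2 * t := by positivity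
  linarith

lemma strictMonoOn_decayBound (hC : 0 < C) (hc : 0 ≤ c) {t : ℝ} (ht : 0 ≤ t) :
    StrictMonoOn (fun s => decayBound C c s t) (Ici 0) := by
  intro s₁ (hs₁ : 0 ≤ s₁) s₂ (hs₂ : 0 ≤ s₂) hs
  have h₁ := one_le_one_add_mul_sq_mul hc s₁ ht
  have h₂ := one_le_one_add_mul_sq_mul hc s₂ ht
  simp only [decayBound]
  rw [div_lt_div_iff₀ (by positivity) (by positivity), mul_assoc C s₁, mul_assoc C s₂,
    mul_lt_mul_iff_right₀ hC, ← pow_lt_pow_iff_left₀ (by positivity) (by positivity) two_ne_zero,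
    mul_pow, mul_pow, Real.sq_sqrt (by linarith), Real.sq_sqrt (by linarith)]
  have : s₁ ^ 2 < s₂ ^ 2 := pow_lt_pow_left₀ hs hs₁ two_ne_zero
  nlinarith [mul_nonneg (mul_nonneg hc ht) (mul_nonneg (sq_nonneg s₁) (sq_nonneg s₂))]

lemma antitoneOn_decayBound (hC : 0 ≤ C) (hc : 0 ≤ c) {s : ℝ} (hs : 0 ≤ s) :
    AntitoneOn (decayBound C c s) (Ici 0) := by
  intro t₁ (ht₁ : 0 ≤ t₁) t₂ _ ht
  have := one_le_one_add_mul_sq_mul hc s ht₁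
  refine div_le_div_of_nonneg_left (by positivity) (by positivity) (Real.sqrt_le_sqrt ?_)
  gcongr

lemma tendsto_decayBound (hc : 0 < c) {s : ℝ} (hs : s ≠ 0) :
    Tendsto (decayBound C c s) atTop (nhds 0) := by
  refine tendsto_const_nhds.div_atTop (Real.tendsto_sqrt_atTop.comp ?_)
  exact tendsto_atTop_add_const_left _ _ (tendsto_id.const_mul_atTop (by positivity))

lemma classKL_decayBound (hC : 0 < C) (hc : 0 < c) : ClassKL (decayBound C c) := by
  have hcont : ContinuousOn (Function.uncurry (decayBound C c)) (Ici 0 ×ˢ Ici 0) := by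
    refine ContinuousOn.div (by fun_prop) (by fun_prop) fun p ⟨_, (hp : 0 ≤ p.2)⟩ => ?_
    have := one_le_one_add_mul_sq_mul hc.le p.1 hp
    positivity
  refine ⟨hcont, fun t ht => ⟨?_, strictMonoOn_decayBound hC hc.le ht, by simp [decayBound]⟩,
    fun s hs => ⟨antitoneOn_decayBound hC.le hc.le hs.le, tendsto_decayBound hc hs.ne'⟩⟩
  exact hcont.comp (by fun_prop : Continuous fun s : ℝ => (s, t)).continuousOn
    fun s hs => ⟨hs, ht⟩

end decayBound

lemma sq_norm_prod_le (a b : ℝ) : ‖(a, b)‖ ^ 2 ≤ a ^ 2 + b ^ 2 := by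
  rw [Prod.norm_mk, Real.norm_eq_abs, Real.norm_eq_abs]
  rcases max_cases |a| |b| with ⟨h, -⟩ | ⟨h, -⟩ <;> rw [h, sq_abs] <;>
    linarith [sq_nonneg a, sq_nonneg b]

lemma add_sq_le_two_mul_sq_norm_prod (a b : ℝ) : a ^ 2 + b ^ 2 ≤ 2 * ‖(a, b)‖ ^ 2 := by
  have ha : a ^ 2 ≤ ‖(a, b)‖ ^ 2 := by
    rw [← sq_abs a, ← Real.norm_eq_abs]; gcongr; exact norm_fst_le (a, b)
  have hb : b ^ 2 ≤ ‖(a, b)‖ ^ 2 := by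
    rw [← sq_abs b, ← Real.norm_eq_abs]; gcongr; exact norm_snd_le (a, b)
  linarith

lemma monotoneOn_Icc_of_hasDerivAt_nonneg {f f' : ℝ → ℝ} {a b : ℝ}
    (hf : ∀ x ∈ Icc a b, HasDerivAt f (f' x) x) (hf' : ∀ x ∈ Icc a b, 0 ≤ f' x) :
    MonotoneOn f (Icc a b) := by
  refine monotoneOn_of_hasDerivWithinAt_nonneg (f' := f') (convex_Icc a b)
    (fun x hx => (hf x hx).continuousAt.continuousWithinAt) (fun x hx => ?_) fun x hx => ?_
  all_goals rw [interior_Icc] at hx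
  · exact (hf x (Ioo_subset_Icc_self hx)).hasDerivWithinAt
  · exact hf' x (Ioo_subset_Icc_self hx)

lemma antitoneOn_Icc_of_hasDerivAt_nonpos {f f' : ℝ → ℝ} {a b : ℝ}
    (hf : ∀ x ∈ Icc a b, HasDerivAt f (f' x) x) (hf' : ∀ x ∈ Icc a b, f' x ≤ 0) :
    AntitoneOn f (Icc a b) := by
  simpa using (monotoneOn_Icc_of_hasDerivAt_nonneg (fun x hx => (hf x hx).neg)
    fun x hx => neg_nonneg.2 (hf' x hx)).neg

lemma inv_add_mul_le_inv_of_hasDerivAt_le_neg_mul_sq {w w' : ℝ → ℝ} {k a b : ℝ}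
    (hab : a ≤ b) (hw : ∀ τ ∈ Icc a b, HasDerivAt w (w' τ) τ)
    (hpos : ∀ τ ∈ Icc a b, 0 < w τ)
    (hw' : ∀ τ ∈ Icc a b, w' τ ≤ -k * w τ ^ 2) :
    (w a)⁻¹ + k * (b - a) ≤ (w b)⁻¹ := by
  have hinv : MonotoneOn (fun τ => (w τ)⁻¹ - k * τ) (Icc a b) := by
    refine monotoneOn_Icc_of_hasDerivAt_nonneg
      (fun τ hτ => ((hw τ hτ).inv (hpos τ hτ).ne').sub ((hasDerivAt_id τ).const_mul k))
      fun τ hτ => ?_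
    rw [mul_one, sub_nonneg, le_div_iff₀ (pow_pos (hpos τ hτ) 2)]
    linarith [hw' τ hτ]
  have := hinv (left_mem_Icc.2 hab) (right_mem_Icc.2 hab) hab
  simp only at this
  linarith

/-- Once `V` vanishes it stays `0`; before that, `w = √V` satisfies `ẇ ≤ -(k/2) w²`. -/
lemma sqrt_le_of_hasDerivAt_le_neg_mul_mul_sqrt {V V' : ℝ → ℝ} {k a b : ℝ} (hk : 0 ≤ k)
    (hab : a ≤ b) (hV : ∀ τ ∈ Icc a b, HasDerivAt V (V' τ) τ)
    (hV₀ : ∀ τ ∈ Icc a b, 0 ≤ V τ)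
    (hV' : ∀ τ ∈ Icc a b, V' τ ≤ -k * (V τ * √(V τ))) :
    √(V b) ≤ √(V a) / (1 + k / 2 * √(V a) * (b - a)) := by
  have hba : 0 ≤ b - a := sub_nonneg.2 hab
  rcases (hV₀ b (right_mem_Icc.2 hab)).eq_or_lt with hVb | hVb
  · rw [← hVb, Real.sqrt_zero]
    positivity
  have hanti : AntitoneOn V (Icc a b) := antitoneOn_Icc_of_hasDerivAt_nonpos hV fun τ hτ =>
    (hV' τ hτ).trans <| mul_nonpos_of_nonpos_of_nonneg (neg_nonpos.2 hk) <| by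
      have := hV₀ τ hτ; positivity
  have hpos : ∀ τ ∈ Icc a b, 0 < V τ := fun τ hτ =>
    hVb.trans_le (hanti hτ (right_mem_Icc.2 hab) hτ.2)
  have hinv := inv_add_mul_le_inv_of_hasDerivAt_le_neg_mul_sq (w := fun τ => √(V τ))
    (k := k / 2) hab (fun τ hτ => (hV τ hτ).sqrt (hpos τ hτ).ne')
    (fun τ hτ => Real.sqrt_pos.2 (hpos τ hτ))
    fun τ hτ => by
      have hsqrt := Real.sqrt_pos.2 (hpos τ hτ)
      rw [div_le_iff₀ (by positivity), Real.sq_sqrt (hpos τ hτ).le]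
      linarith [hV' τ hτ]
  have ha := Real.sqrt_pos.2 (hpos a (left_mem_Icc.2 hab))
  have hb := Real.sqrt_pos.2 hVb
  rw [le_div_iff₀ (by positivity)]
  rw [← mul_le_mul_iff_right₀ (mul_pos ha hb)] at hinv
  field_simp at hinv
  linarith

def lyapunov (u v : ℝ) : ℝ := 4 / 125 * v ^ 4 + (v - u) ^ 4 + 1 / 10 * u ^ 4

section lyapunov

variable (u v : ℝ)

lemma sq_add_sq_sq_le_lyapunov : (u ^ 2 + v ^ 2) ^ 2 / 64 ≤ lyapunov u v := by
  unfold lyapunov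
  nlinarith [sq_nonneg (u ^ 2 - 80 / 43 * u * v + 166 / 215 * v ^ 2),
    sq_nonneg (u * v - 1960 / 2447 * v ^ 2), sq_nonneg (v ^ 2), sq_nonneg (u ^ 2 + v ^ 2)]

lemma lyapunov_le : lyapunov u v ≤ 16 * (u ^ 2 + v ^ 2) ^ 2 := by
  unfold lyapunov
  nlinarith [sq_nonneg (u * v), sq_nonneg (u + v), sq_nonneg (u - v), sq_nonneg (u ^ 2 - v ^ 2)]

lemma lyapunov_nonneg : 0 ≤ lyapunov u v :=
  (by positivity : (0 : ℝ) ≤ (u ^ 2 + v ^ 2) ^ 2 / 64).trans (sq_add_sq_sq_le_lyapunov u v)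

lemma sq_add_sq_cube_le :
    (u ^ 2 + v ^ 2) ^ 3 / 1000 ≤ 4 * (v - u) ^ 6 + 8 / 625 * u ^ 3 * v ^ 3 := by
  nlinarith [sq_nonneg (u ^ 3 - 4000 / 1333 * u ^ 2 * v + 11828 / 3999 * u * v ^ 2
      - 3833 / 3999 * v ^ 3),
    sq_nonneg (u ^ 2 * v - 4450399 / 2212765 * u * v ^ 2 + 433391 / 442553 * v ^ 3),
    sq_nonneg (u * v ^ 2 - 301433305 / 527741134 * v ^ 3), sq_nonneg (v ^ 3)]

lemma sq_add_sq_le_sqrt_lyapunov : u ^ 2 + v ^ 2 ≤ 8 * √(lyapunov u v) := by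
  have h := Real.sqrt_le_sqrt (sq_add_sq_sq_le_lyapunov u v)
  rwa [Real.sqrt_div' _ (by norm_num : (0 : ℝ) ≤ 64), Real.sqrt_sq (by positivity),
    show √(64 : ℝ) = 8 by rw [show (64 : ℝ) = 8 ^ 2 by norm_num, Real.sqrt_sq (by norm_num)],
    div_le_iff₀' (by norm_num)] at h

lemma sqrt_lyapunov_le : √(lyapunov u v) ≤ 4 * (u ^ 2 + v ^ 2) := by
  rw [Real.sqrt_le_left (by positivity)]
  linarith [lyapunov_le u v]

lemma lyapunov_mul_sqrt_le : lyapunov u v * √(lyapunov u v) ≤ 64 * (u ^ 2 + v ^ 2) ^ 3 := by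
  calc lyapunov u v * √(lyapunov u v) ≤ 16 * (u ^ 2 + v ^ 2) ^ 2 * (4 * (u ^ 2 + v ^ 2)) :=
        mul_le_mul (lyapunov_le u v) (sqrt_lyapunov_le u v) (Real.sqrt_nonneg _) (by positivity)
    _ = 64 * (u ^ 2 + v ^ 2) ^ 3 := by ring

end lyapunov

lemma hasDerivAt_lyapunov {u v : ℝ → ℝ} {t : ℝ} (hu : HasDerivAt u (-(4 / 125) * v t ^ 3) t)
    (hv : HasDerivAt v (-(v t - u t) ^ 3) t) :
    HasDerivAt (fun τ => lyapunov (u τ) (v τ))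
      (-(4 * (v t - u t) ^ 6 + 8 / 625 * u t ^ 3 * v t ^ 3)) t := by
  refine ((((hv.fun_pow 4).const_mul (4 / 125)).add ((hv.sub hu).fun_pow 4)).add
    ((hu.fun_pow 4).const_mul (1 / 10))).congr_deriv ?_
  push_cast [Pi.sub_apply]
  ring

lemma div_one_add_mul_le_div_one_add_mul {x y c : ℝ} (hc : 0 ≤ c) (hx : 0 ≤ x)
    (hxy : x ≤ y) :
    x / (1 + c * x) ≤ y / (1 + c * y) := by
  rw [div_le_div_iff₀ (by positivity) (by nlinarith)]
  linarith

theorem norm_le_decayBound {u v : ℝ → ℝ}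
    (hu : ∀ t ≥ 0, HasDerivAt u (-(4 / 125) * v t ^ 3) t)
    (hv : ∀ t ≥ 0, HasDerivAt v (-(v t - u t) ^ 3) t) {t : ℝ} (ht : 0 ≤ t) :
    ‖(u t, v t)‖ ≤ decayBound 8 (1 / 16000) ‖(u 0, v 0)‖ t := by
  set s := ‖(u 0, v 0)‖
  set W := fun τ => √(lyapunov (u τ) (v τ))
  have hW : W t ≤ W 0 / (1 + t / 128000 * W 0) := by
    convert sqrt_le_of_hasDerivAt_le_neg_mul_mul_sqrt (k := 1 / 64000) (by norm_num) ht
      (fun τ hτ => hasDerivAt_lyapunov (hu τ hτ.1) (hv τ hτ.1))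
      (fun τ _ => lyapunov_nonneg (u τ) (v τ)) (fun τ _ => ?_) using 3
    · ring
    linarith [sq_add_sq_cube_le (u τ) (v τ), lyapunov_mul_sqrt_le (u τ) (v τ)]
  have hW0 : W 0 ≤ 8 * s ^ 2 := by
    have := sqrt_lyapunov_le (u 0) (v 0)
    have := add_sq_le_two_mul_sq_norm_prod (u 0) (v 0)
    linarith
  have hWt : ‖(u t, v t)‖ ^ 2 ≤ 8 * W t :=
    (sq_norm_prod_le _ _).trans (sq_add_sq_le_sqrt_lyapunov _ _)
  have hsq : ‖(u t, v t)‖ ^ 2 ≤ decayBound 8 (1 / 16000) s t ^ 2 := by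
    calc ‖(u t, v t)‖ ^ 2
        ≤ 8 * (W 0 / (1 + t / 128000 * W 0)) := by linarith
      _ ≤ 8 * (8 * s ^ 2 / (1 + t / 128000 * (8 * s ^ 2))) := by
        gcongr 8 * ?_
        exact div_one_add_mul_le_div_one_add_mul (by positivity) (Real.sqrt_nonneg _) hW0
      _ = decayBound 8 (1 / 16000) s t ^ 2 := by
        have := one_le_one_add_mul_sq_mul (by norm_num : (0 : ℝ) ≤ 1 / 16000) s ht
        rw [decayBound, div_pow, Real.sq_sqrt (by positivity)]
        ring
  have : 0 ≤ decayBound 8 (1 / 16000) s t := by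
    unfold decayBound; positivity
  exact (pow_le_pow_iff_left₀ (norm_nonneg _) this two_ne_zero).1 hsq

/-- **Example 2**: the feedback optimization closed loop
`ẋ = 0.004·(2−2z)³`, `ż = −(z−x−1)³` is globally asymptotically stable at the
equilibrium `(x,z) = (0,1)`. -/
theorem stmt_13 :
    ∃ β : ℝ → ℝ → ℝ, ClassKL β ∧
      ∀ x z : ℝ → ℝ,
        (∀ t ≥ 0, HasDerivAt x (0.004 * (2 - 2 * z t) ^ 3) t) →
        (∀ t ≥ 0, HasDerivAt z (-(z t - x t - 1) ^ 3) t) →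
        ∀ t ≥ 0, ‖(x t, z t - 1)‖ ≤ β ‖(x 0, z 0 - 1)‖ t := by
  refine ⟨decayBound 8 (1 / 16000), classKL_decayBound (by norm_num) (by norm_num), ?_⟩
  intro x z hx hz t ht
  refine norm_le_decayBound (u := x) (v := fun τ => z τ - 1) (fun τ hτ => ?_)
    (fun τ hτ => ?_) ht
  · exact (hx τ hτ).congr_deriv (by norm_num; ring)
  · exact ((hz τ hτ).sub_const 1).congr_deriv (by ring)
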